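/- A left quasi-morphic ring R has stable range one if and only if R is left uniquely generated. -/

import Mathlib

/-!
Both directions rest on Vaserstein's observation that `a + (1 - a x) t` is a unit exactly when
`a + t (1 - x a)` is, so that stable range one may be used on either side.

If `a = s b` and `b = t a`, stable range one applied to `t s + (1 - t s) = 1` yields a unit
`u = t + τ (1 - s t)`, and `u a = t a = b` because `(1 - s t) a = a - s b = 0`.

Conversely, given `a x + b = 1`, write `R (1 - x a) = ann_l(e)`. Then `e = x a e`, so
`R (a e) = R e` and unique generation gives a unit `u` with `a e = u e`. Hence `a - u` annihilates
`e`, i.e. `a - u = c (1 - x a)`, and the unit `a - c (1 - x a)` transfers to `a + b (-c)`.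
-/

def HasStableRangeOne (R : Type*) [Ring R] : Prop :=
  ∀ a x b : R, a * x + b = 1 → ∃ y : R, IsUnit (a + b * y)

def IsLeftUniquelyGenerated (R : Type*) [Ring R] : Prop :=
  ∀ a b : R, (∀ r : R, (∃ s : R, r = s * a) ↔ (∃ s : R, r = s * b)) →
    ∃ u : R, IsUnit u ∧ a = u * b

section

variable {R : Type*} [Ring R]

theorem exists_mul_eq_one_of_mul_eq_mul {c x p q r w : R} (hw : IsUnit w)
    (h : c * x + p * q = 1) (hc : c * r = p * w) : ∃ d, c * d = 1 :=
  ⟨x + r * hw.unit⁻¹ * q, by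
    rw [mul_add, ← mul_assoc, ← mul_assoc, hc, mul_assoc p, IsUnit.mul_val_inv, mul_one, h]⟩

theorem exists_mul_eq_one_of_mul_eq_mul' {c x p q r w : R} (hw : IsUnit w)
    (h : x * c + q * p = 1) (hc : r * c = w * p) : ∃ d, d * c = 1 :=
  ⟨x + q * hw.unit⁻¹ * r, by
    rw [add_mul, mul_assoc _ r, hc, ← mul_assoc, mul_assoc q, IsUnit.val_inv_mul, mul_one, h]⟩

theorem IsUnit.add_mul_one_sub_mul {a x t : R} (h : IsUnit (a + (1 - a * x) * t)) :
    IsUnit (a + t * (1 - x * a)) :=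
  isUnit_iff_exists_and_exists.mpr
    ⟨exists_mul_eq_one_of_mul_eq_mul (x := x) (p := 1 - t * x) (q := 1 - a * x) (r := 1 - x * t)
        h (by noncomm_ring) (by noncomm_ring),
      exists_mul_eq_one_of_mul_eq_mul' (x := x) (p := 1 - x * a) (q := 1 - x * t)
        (r := 1 - a * x) h (by noncomm_ring) (by noncomm_ring)⟩

open MulOpposite in
theorem isUnit_add_one_sub_mul_mul_iff {a x t : R} :
    IsUnit (a + (1 - a * x) * t) ↔ IsUnit (a + t * (1 - x * a)) := by
  refine ⟨IsUnit.add_mul_one_sub_mul, fun h => ?_⟩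
  have hop : IsUnit (op a + (1 - op a * op x) * op t) := by
    simpa only [← op_mul, ← op_one, ← op_sub, ← op_add, isUnit_op] using h
  simpa only [← op_mul, ← op_one, ← op_sub, ← op_add, isUnit_op] using hop.add_mul_one_sub_mul

theorem HasStableRangeOne.isLeftUniquelyGenerated (hsr : HasStableRangeOne R) :
    IsLeftUniquelyGenerated R := by
  intro a b hab
  obtain ⟨s, hs⟩ := (hab a).mp ⟨1, (one_mul a).symm⟩
  obtain ⟨t, ht⟩ := (hab b).mpr ⟨1, (one_mul b).symm⟩
  obtain ⟨τ, hτ⟩ := hsr t s (1 - t * s) (add_sub_cancel _ _)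
  obtain ⟨u, hu⟩ := isUnit_add_one_sub_mul_mul_iff.mp hτ
  have hua : (u : R) * a = b := by
    rw [hu, add_mul, ht, mul_assoc, sub_mul, one_mul, mul_assoc, ← ht, ← hs, sub_self,
      mul_zero, add_zero]
  exact ⟨(u⁻¹ : Rˣ), u⁻¹.isUnit, by rw [← hua, Units.inv_mul_cancel_left]⟩

theorem IsLeftUniquelyGenerated.hasStableRangeOne
    (hann : ∀ y : R, ∃ e : R, ∀ r : R, (∃ s : R, r = s * y) ↔ r * e = 0)
    (hug : IsLeftUniquelyGenerated R) : HasStableRangeOne R := by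
  intro a x b hb
  obtain ⟨e, he⟩ := hann (1 - x * a)
  have hxae : e = x * (a * e) := by
    have : (1 - x * a) * e = 0 := (he _).mp ⟨1, (one_mul _).symm⟩
    rwa [sub_mul, one_mul, sub_eq_zero, mul_assoc] at this
  obtain ⟨u, hu, hue⟩ := hug (a * e) e fun r =>
    ⟨fun ⟨s, hs⟩ => ⟨s * a, by rw [hs, mul_assoc]⟩,
      fun ⟨s, hs⟩ => ⟨s * x, by rw [hs, mul_assoc, ← hxae]⟩⟩
  obtain ⟨c, hc⟩ := (he (a - u)).mpr (by rw [sub_mul, hue, sub_self])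
  have hunit : IsUnit (a + -c * (1 - x * a)) := by
    rwa [neg_mul, ← hc, neg_sub, add_sub_cancel]
  exact ⟨-c, by simpa only [← hb, add_sub_cancel_left] using isUnit_add_one_sub_mul_mul_iff.mpr hunit⟩

end

theorem stmt_10_general (R : Type*) [Ring R]
    (hqm1 : ∀ y : R, ∃ a : R, ∀ r : R, (∃ s : R, r = s * y) ↔ r * a = 0) :
    (∀ a x b : R, a * x + b = 1 → ∃ y : R, IsUnit (a + b * y)) ↔
    (∀ a b : R, (∀ r : R, (∃ s : R, r = s * a) ↔ (∃ s : R, r = s * b)) →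
      ∃ u : R, IsUnit u ∧ a = u * b) :=
  ⟨HasStableRangeOne.isLeftUniquelyGenerated,
    IsLeftUniquelyGenerated.hasStableRangeOne hqm1⟩

theorem stmt_10 (R : Type*) [Ring R]
    (hqm1 : ∀ y : R, ∃ a : R, ∀ r : R, (∃ s : R, r = s * y) ↔ r * a = 0)
    (hqm2 : ∀ a : R, ∃ y : R, ∀ r : R, r * a = 0 ↔ (∃ s : R, r = s * y)) :
    (∀ a x b : R, a * x + b = 1 → ∃ y : R, IsUnit (a + b * y)) ↔
    (∀ a b : R, (∀ r : R, (∃ s : R, r = s * a) ↔ (∃ s : R, r = s * b)) →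
      ∃ u : R, IsUnit u ∧ a = u * b) :=
  stmt_10_general R hqm1
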